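/- Let Δ and γ be real numbers with 0 ≤ Δ and 0 < γ < 1, let t₀ ≥ 1 be a natural number, and suppose Δ < γ^(t₀-1). Let r : ℕ → ℝ satisfy 0 ≤ r t ≤ Δ for every t, and let s : ℕ → ℝ satisfy 0 ≤ s t ≤ 1 for every t and s t = 1 for every t ≥ t₀ - 1. Then ∑'_{t=0}^∞ γ^t · r t < ∑'_{t=0}^∞ γ^t · s t. -/

import Mathlib

/-! The reward `r` is at most `Δ` everywhere, so its discounted return is at most `Δ / (1 - γ)`;
the reward `s` is nonnegative and equals `1` from time `t₀ - 1` on, so its return is at least the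
geometric tail `γ ^ (t₀ - 1) / (1 - γ)`. The hypothesis `Δ < γ ^ (t₀ - 1)` separates the two. -/

open Finset

section DiscountedReturn

variable {γ : ℝ} {f : ℕ → ℝ}

lemma summable_pow_mul_of_nonneg_of_le {c : ℝ} (hγ0 : 0 ≤ γ) (hγ1 : γ < 1)
    (hf0 : ∀ t, 0 ≤ f t) (hfc : ∀ t, f t ≤ c) : Summable fun t ↦ γ ^ t * f t :=
  ((summable_geometric_of_lt_one hγ0 hγ1).mul_right c).of_nonneg_of_le
    (fun t ↦ mul_nonneg (pow_nonneg hγ0 t) (hf0 t))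
    (fun t ↦ mul_le_mul_of_nonneg_left (hfc t) (pow_nonneg hγ0 t))

lemma tsum_pow_mul_le_div_one_sub {c : ℝ} (hγ0 : 0 ≤ γ) (hγ1 : γ < 1)
    (hf0 : ∀ t, 0 ≤ f t) (hfc : ∀ t, f t ≤ c) : ∑' t, γ ^ t * f t ≤ c / (1 - γ) :=
  calc ∑' t, γ ^ t * f t
      ≤ ∑' t, γ ^ t * c :=
        (summable_pow_mul_of_nonneg_of_le hγ0 hγ1 hf0 hfc).tsum_le_tsum
          (fun t ↦ mul_le_mul_of_nonneg_left (hfc t) (pow_nonneg hγ0 t))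
          ((summable_geometric_of_lt_one hγ0 hγ1).mul_right c)
    _ = c / (1 - γ) := by
        rw [tsum_mul_right, tsum_geometric_of_lt_one hγ0 hγ1, inv_mul_eq_div]

lemma tsum_pow_mul_nat_add_of_eq_one {n : ℕ} (hγ0 : 0 ≤ γ) (hγ1 : γ < 1)
    (hfn : ∀ t, n ≤ t → f t = 1) : ∑' t, γ ^ (t + n) * f (t + n) = γ ^ n / (1 - γ) := by
  simp_rw [hfn _ (Nat.le_add_left n _), mul_one, pow_add, tsum_mul_right,
    tsum_geometric_of_lt_one hγ0 hγ1, inv_mul_eq_div]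

lemma pow_div_one_sub_le_tsum_pow_mul {n : ℕ} (hγ0 : 0 ≤ γ) (hγ1 : γ < 1)
    (hf0 : ∀ t, 0 ≤ f t) (hfn : ∀ t, n ≤ t → f t = 1) :
    γ ^ n / (1 - γ) ≤ ∑' t, γ ^ t * f t := by
  have h_tail : Summable fun t ↦ γ ^ (t + n) * f (t + n) := by
    simp_rw [hfn _ (Nat.le_add_left n _), mul_one]
    exact (summable_nat_add_iff n).2 (summable_geometric_of_lt_one hγ0 hγ1)
  rw [← (summable_nat_add_iff n).1 h_tail |>.sum_add_tsum_nat_add n,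
    tsum_pow_mul_nat_add_of_eq_one hγ0 hγ1 hfn]
  exact le_add_of_nonneg_left <| sum_nonneg fun t _ ↦ mul_nonneg (pow_nonneg hγ0 t) (hf0 t)

end DiscountedReturn

theorem goal_trajectory_dominates_general
    (Δ γ : ℝ) (hγ0 : 0 < γ) (hγ1 : γ < 1)
    (t₀ : ℕ) (hfav : Δ < γ ^ (t₀ - 1))
    (r : ℕ → ℝ) (hr : ∀ t, 0 ≤ r t ∧ r t ≤ Δ)
    (s : ℕ → ℝ) (hs : ∀ t, 0 ≤ s t ∧ s t ≤ 1)
    (hs1 : ∀ t, t₀ - 1 ≤ t → s t = 1) :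
    (∑' t : ℕ, γ ^ t * r t) < ∑' t : ℕ, γ ^ t * s t :=
  calc ∑' t, γ ^ t * r t
      ≤ Δ / (1 - γ) :=
        tsum_pow_mul_le_div_one_sub hγ0.le hγ1 (fun t ↦ (hr t).1) (fun t ↦ (hr t).2)
    _ < γ ^ (t₀ - 1) / (1 - γ) := div_lt_div_of_pos_right hfav (sub_pos.2 hγ1)
    _ ≤ ∑' t, γ ^ t * s t := pow_div_one_sub_le_tsum_pow_mul hγ0.le hγ1 (fun t ↦ (hs t).1) hs1

/-- Deterministic-trajectory core of Theorem 1 (FV-RS): if `γ ^ (t₀ - 1) > Δ`, a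
trajectory reaching the goal within `t₀ - 1` steps and staying there has strictly
larger discounted return than any trajectory that never enters the goal. -/
theorem goal_trajectory_dominates
    (Δ γ : ℝ) (hΔ0 : 0 ≤ Δ) (hγ0 : 0 < γ) (hγ1 : γ < 1)
    (t₀ : ℕ) (ht₀ : 1 ≤ t₀) (hfav : Δ < γ ^ (t₀ - 1))
    (r : ℕ → ℝ) (hr : ∀ t, 0 ≤ r t ∧ r t ≤ Δ)
    (s : ℕ → ℝ) (hs : ∀ t, 0 ≤ s t ∧ s t ≤ 1)
    (hs1 : ∀ t, t₀ - 1 ≤ t → s t = 1) :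
    (∑' t : ℕ, γ ^ t * r t) < ∑' t : ℕ, γ ^ t * s t :=
  goal_trajectory_dominates_general Δ γ hγ0 hγ1 t₀ hfav r hr s hs hs1
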